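/- Let d ∈ ℕ, v ∈ ℂ^d, θ ∈ ℝ, and let μ be a Borel measure on U_d := [0,∞)^d∖{0} with ∫_{U_d}‖z‖² μ(dz) < ∞. For w ≥ 0 and z ∈ U_d set g_z(w) := (Re(e^{iθw} ⟨v,z⟩), Im(e^{iθw} ⟨v,z⟩))^⊤ ∈ ℝ². Then, as t → ∞, (1/t)∫_0^t ∫_{U_d} g_z(w) g_z(w)^⊤ μ(dz) dw converges to (1/2)(∫_{U_d}|⟨v,z⟩|² μ(dz)) I_2 + (1/2)·[[Re(∫_{U_d}⟨v,z⟩² μ(dz)), Im(∫_{U_d}⟨v,z⟩² μ(dz))],[Im(∫_{U_d}⟨v,z⟩² μ(dz)), −Re(∫_{U_d}⟨v,z⟩² μ(dz))]]·1_{θ=0}. -/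

import Mathlib

/-!
Put `ζ = e^{iθw} ⟨v,z⟩`. Every entry of `g gᵀ` is a real quadratic form in `ζ ∈ ℂ ≅ ℝ²`, hence of
the form `a ‖ζ‖² + ℓ(ζ²)` with `ℓ : ℂ →L[ℝ] ℝ`. The first part does not depend on `w`; integrating
the second in `z` gives `ℓ(e^{2iθw} ∫⟨v,z⟩² dμ)`, and the Cesàro average of `e^{2iθw}` tends to
`1_{θ=0}`. The second-moment condition puts `⟨v,·⟩` in `L²(μ)`, which makes every `z`-integral finite.
-/

open MeasureTheory Filter
open scoped ENNReal

/-- The pairing `⟨v,z⟩ = ∑ j, v j * z j` of `v ∈ ℂ^d` with `z ∈ ℝ^d`. -/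
noncomputable def pairCV {d : ℕ} (v : Fin d → ℂ) (z : Fin d → ℝ) : ℂ :=
  ∑ j, v j * (z j : ℂ)

open Topology Complex

theorem Complex.re_sq_eq (ζ : ℂ) : ζ.re ^ 2 = ‖ζ‖ ^ 2 / 2 + (ζ ^ 2).re / 2 := by
  rw [Complex.sq_norm, normSq_apply, pow_two ζ, mul_re]; ring

theorem Complex.im_sq_eq (ζ : ℂ) : ζ.im ^ 2 = ‖ζ‖ ^ 2 / 2 - (ζ ^ 2).re / 2 := by
  rw [Complex.sq_norm, normSq_apply, pow_two ζ, mul_re]; ring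

theorem Complex.re_mul_im_eq (ζ : ℂ) : ζ.re * ζ.im = (ζ ^ 2).im / 2 := by
  rw [sq, mul_im]; ring

theorem norm_integral_exp_I_mul_le {b : ℝ} (hb : b ≠ 0) (t : ℝ) :
    ‖∫ w in (0:ℝ)..t, exp (I * (b * w))‖ ≤ 2 / |b| := by
  have hIb : I * b ≠ 0 := by simp [hb]
  have hexp : ‖exp (I * b * t)‖ = 1 := by
    rw [mul_assoc, ← ofReal_mul]; exact norm_exp_I_mul_ofReal _
  simp_rw [← mul_assoc]
  rw [integral_exp_mul_complex hIb, norm_div, norm_mul, norm_I, one_mul, norm_real,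
    Real.norm_eq_abs]
  gcongr
  calc _ ≤ ‖exp (I * b * t)‖ + ‖exp (I * b * (0 : ℝ))‖ := norm_sub_le _ _
    _ = 2 := by rw [hexp, ofReal_zero, mul_zero, exp_zero, norm_one]; norm_num

theorem tendsto_average_integral_exp_I_mul (b : ℝ) :
    Tendsto (fun t : ℝ => t⁻¹ • ∫ w in (0:ℝ)..t, exp (I * (b * w))) atTop
      (𝓝 (if b = 0 then 1 else 0)) := by
  split_ifs with hb
  · subst hb
    refine tendsto_const_nhds.congr' ?_
    filter_upwards [eventually_ne_atTop 0] with t ht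
    simp [ht]
  · exact tendsto_inv_atTop_zero.zero_smul_isBoundedUnder_le
      ⟨2 / |b|, eventually_map.2 (Eventually.of_forall (norm_integral_exp_I_mul_le hb))⟩

section

variable {X : Type*} [MeasurableSpace X] {μ : Measure X} {c : X → ℂ}

theorem integral_comp_mul_of_norm_eq_one (hc : MemLp c 2 μ) (a : ℝ) (ℓ : ℂ →L[ℝ] ℝ) {F : ℂ → ℝ}
    (hF : ∀ ζ, F ζ = a * ‖ζ‖ ^ 2 + ℓ (ζ ^ 2)) {e : ℂ} (he : ‖e‖ = 1) :
    ∫ x, F (e * c x) ∂μ = a * ∫ x, ‖c x‖ ^ 2 ∂μ + ℓ (e ^ 2 * ∫ x, c x ^ 2 ∂μ) := by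
  have hnorm : Integrable (fun x => ‖c x‖ ^ 2) μ := (memLp_two_iff_integrable_sq_norm hc.1).1 hc
  have hsq : Integrable (fun x => e ^ 2 * c x ^ 2) μ :=
    (hnorm.mono' (hc.1.pow 2) (by simp [norm_pow])).const_mul _
  simp_rw [hF, norm_mul, he, one_mul, mul_pow]
  rw [integral_add (hnorm.const_mul a) (ℓ.integrable_comp hsq), integral_const_mul,
    ℓ.integral_comp_comm hsq, integral_const_mul]

theorem tendsto_average_integral_comp_exp_mul (hc : MemLp c 2 μ) (a : ℝ) (ℓ : ℂ →L[ℝ] ℝ)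
    {F : ℂ → ℝ} (hF : ∀ ζ, F ζ = a * ‖ζ‖ ^ 2 + ℓ (ζ ^ 2)) (θ : ℝ) :
    Tendsto (fun t : ℝ => 1 / t * ∫ w in (0:ℝ)..t, ∫ x, F (exp (I * (θ * w)) * c x) ∂μ) atTop
      (𝓝 (a * ∫ x, ‖c x‖ ^ 2 ∂μ + ℓ (if θ = 0 then ∫ x, c x ^ 2 ∂μ else 0))) := by
  set A := ∫ x, ‖c x‖ ^ 2 ∂μ
  set S := ∫ x, c x ^ 2 ∂μ
  set E : ℝ → ℂ := fun w => exp (I * ((2 * θ : ℝ) * w))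
  have hE : Continuous fun w => E w * S := by fun_prop
  have hinner (w : ℝ) : ∫ x, F (exp (I * (θ * w)) * c x) ∂μ = a * A + ℓ (E w * S) := by
    have hunit : ‖exp (I * (θ * w))‖ = 1 := by
      rw [← ofReal_mul]; exact norm_exp_I_mul_ofReal _
    rw [integral_comp_mul_of_norm_eq_one hc a ℓ hF hunit, ← exp_nat_mul]
    congr 4
    push_cast
    ring
  have hintegral (t : ℝ) : ∫ w in (0:ℝ)..t, (a * A + ℓ (E w * S))
      = t * (a * A) + ℓ ((∫ w in (0:ℝ)..t, E w) * S) := by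
    have hℓE : IntervalIntegrable (fun w => ℓ (E w * S)) volume 0 t :=
      (ℓ.continuous.comp hE).intervalIntegrable _ _
    rw [intervalIntegral.integral_add intervalIntegrable_const hℓE, intervalIntegral.integral_const,
      ℓ.intervalIntegral_comp_comm (hE.intervalIntegrable _ _), intervalIntegral.integral_mul_const]
    simp
  have hlim := (tendsto_const_nhds (x := a * A)).add
    ((ℓ.continuous.tendsto _).comp ((tendsto_average_integral_exp_I_mul (2 * θ)).mul_const S))
  convert hlim.congr' ?_ using 3
  · simp [ite_mul]
  · filter_upwards [eventually_ne_atTop 0] with t ht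
    simp only [hinner, hintegral, Function.comp_apply, smul_mul_assoc, ℓ.map_smul, smul_eq_mul,
      one_div, mul_add, inv_mul_cancel_left₀ ht]
    rfl

end

theorem Matrix.tendsto_of_fin_two {α R : Type*} [TopologicalSpace R] {l : Filter α}
    {a b c d : α → R} {a₀ b₀ c₀ d₀ : R} (ha : Tendsto a l (𝓝 a₀)) (hb : Tendsto b l (𝓝 b₀))
    (hc : Tendsto c l (𝓝 c₀)) (hd : Tendsto d l (𝓝 d₀)) :
    Tendsto (fun x => !![a x, b x; c x, d x]) l (𝓝 !![a₀, b₀; c₀, d₀]) :=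
  tendsto_pi_nhds.2 fun i => tendsto_pi_nhds.2 fun j => by
    fin_cases i <;> fin_cases j <;> simpa

theorem continuous_pairCV {d : ℕ} (v : Fin d → ℂ) : Continuous (pairCV v) := by
  unfold pairCV; fun_prop

theorem norm_pairCV_le {d : ℕ} (v : Fin d → ℂ) (z : Fin d → ℝ) :
    ‖pairCV v z‖ ≤ (∑ j, ‖v j‖) * ‖z‖ := by
  calc ‖pairCV v z‖ ≤ ∑ j, ‖v j * (z j : ℂ)‖ := norm_sum_le _ _
    _ ≤ ∑ j, ‖v j‖ * ‖z‖ := by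
        gcongr with j
        rw [norm_mul, norm_real]
        gcongr
        exact norm_le_pi_norm z j
    _ = (∑ j, ‖v j‖) * ‖z‖ := (Finset.sum_mul ..).symm

theorem memLp_two_pairCV {d : ℕ} (v : Fin d → ℂ) {μ : Measure (Fin d → ℝ)}
    (hmom : ∫⁻ z, (‖z‖₊ : ℝ≥0∞) ^ 2 ∂μ < ⊤) : MemLp (pairCV v) 2 μ := by
  have hid : MemLp id 2 μ := by
    refine (memLp_two_iff_integrable_sq_norm aestronglyMeasurable_id).2
      ⟨(continuous_norm.pow 2).aestronglyMeasurable, ?_⟩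
    simpa [HasFiniteIntegral, nnnorm_pow, ← enorm_eq_nnnorm] using hmom
  exact hid.of_le_mul (continuous_pairCV v).aestronglyMeasurable
    (Eventually.of_forall (norm_pairCV_le v))

theorem stmt12_general (d : ℕ) (v : Fin d → ℂ) (θ : ℝ) (μ : Measure (Fin d → ℝ))
    (hmom : ∫⁻ z, (‖z‖₊ : ℝ≥0∞) ^ 2 ∂μ < ⊤) :
    Tendsto
      (fun t : ℝ => (1 / t) •
        !![∫ w in (0:ℝ)..t, ∫ z, ((Complex.exp (Complex.I * (θ * w)) * pairCV v z).re) ^ 2 ∂μ,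
           ∫ w in (0:ℝ)..t, ∫ z, (Complex.exp (Complex.I * (θ * w)) * pairCV v z).re *
             (Complex.exp (Complex.I * (θ * w)) * pairCV v z).im ∂μ;
           ∫ w in (0:ℝ)..t, ∫ z, (Complex.exp (Complex.I * (θ * w)) * pairCV v z).re *
             (Complex.exp (Complex.I * (θ * w)) * pairCV v z).im ∂μ,
           ∫ w in (0:ℝ)..t, ∫ z, ((Complex.exp (Complex.I * (θ * w)) * pairCV v z).im) ^ 2 ∂μ])
      atTop
      (nhds (((∫ z, ‖pairCV v z‖ ^ 2 ∂μ) / 2) • (1 : Matrix (Fin 2) (Fin 2) ℝ)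
        + (if θ = 0 then
            (1 / 2 : ℝ) •
              !![(∫ z, (pairCV v z) ^ 2 ∂μ).re, (∫ z, (pairCV v z) ^ 2 ∂μ).im;
                 (∫ z, (pairCV v z) ^ 2 ∂μ).im, -(∫ z, (pairCV v z) ^ 2 ∂μ).re]
          else 0))) := by
  have hc := memLp_two_pairCV v hmom
  have h₁₁ := tendsto_average_integral_comp_exp_mul hc (1 / 2) ((1 / 2 : ℝ) • reCLM)
    (F := fun ζ => ζ.re ^ 2) (fun ζ => by
      simp only [re_sq_eq, smul_apply, reCLM_apply, smul_eq_mul]; ring) θ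
  have h₁₂ := tendsto_average_integral_comp_exp_mul hc 0 ((1 / 2 : ℝ) • imCLM)
    (F := fun ζ => ζ.re * ζ.im) (fun ζ => by
      simp only [re_mul_im_eq, smul_apply, imCLM_apply, smul_eq_mul]; ring) θ
  have h₂₂ := tendsto_average_integral_comp_exp_mul hc (1 / 2) (-(1 / 2 : ℝ) • reCLM)
    (F := fun ζ => ζ.im ^ 2) (fun ζ => by
      simp only [im_sq_eq, smul_apply, reCLM_apply, smul_eq_mul]; ring) θ
  convert Matrix.tendsto_of_fin_two h₁₁ h₁₂ h₁₂ h₂₂ using 2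
  · ext i j; fin_cases i <;> fin_cases j <;> rfl
  · split_ifs <;> ext i j <;> fin_cases i <;> fin_cases j <;> simp <;> ring

/-- Let `μ` be a Borel measure on `U_d = [0,∞)^d \ {0}` with `∫ ‖z‖² dμ < ∞`, `v ∈ ℂ^d`, `θ ∈ ℝ`.
With `g_z(w) = (Re(e^{iθw} ⟨v,z⟩), Im(e^{iθw} ⟨v,z⟩))ᵀ`, the Cesàro averages
`(1/t) ∫_0^t ∫_{U_d} g_z(w) g_z(w)ᵀ μ(dz) dw` converge, as `t → ∞`, to
`(1/2)(∫|⟨v,z⟩|²dμ) I₂ + (1/2)[[Re ∫⟨v,z⟩²dμ, Im ∫⟨v,z⟩²dμ],[Im ∫⟨v,z⟩²dμ, -Re ∫⟨v,z⟩²dμ]]·1_{θ=0}`. -/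
theorem stmt12 (d : ℕ) (v : Fin d → ℂ) (θ : ℝ) (μ : Measure (Fin d → ℝ))
    (hsupp : μ {z | ¬ ((∀ i, 0 ≤ z i) ∧ z ≠ 0)} = 0)
    (hmom : ∫⁻ z, (‖z‖₊ : ℝ≥0∞) ^ 2 ∂μ < ⊤) :
    Tendsto
      (fun t : ℝ => (1 / t) •
        !![∫ w in (0:ℝ)..t, ∫ z, ((Complex.exp (Complex.I * (θ * w)) * pairCV v z).re) ^ 2 ∂μ,
           ∫ w in (0:ℝ)..t, ∫ z, (Complex.exp (Complex.I * (θ * w)) * pairCV v z).re *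
             (Complex.exp (Complex.I * (θ * w)) * pairCV v z).im ∂μ;
           ∫ w in (0:ℝ)..t, ∫ z, (Complex.exp (Complex.I * (θ * w)) * pairCV v z).re *
             (Complex.exp (Complex.I * (θ * w)) * pairCV v z).im ∂μ,
           ∫ w in (0:ℝ)..t, ∫ z, ((Complex.exp (Complex.I * (θ * w)) * pairCV v z).im) ^ 2 ∂μ])
      atTop
      (nhds (((∫ z, ‖pairCV v z‖ ^ 2 ∂μ) / 2) • (1 : Matrix (Fin 2) (Fin 2) ℝ)
        + (if θ = 0 then
            (1 / 2 : ℝ) •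
              !![(∫ z, (pairCV v z) ^ 2 ∂μ).re, (∫ z, (pairCV v z) ^ 2 ∂μ).im;
                 (∫ z, (pairCV v z) ^ 2 ∂μ).im, -(∫ z, (pairCV v z) ^ 2 ∂μ).re]
          else 0))) :=
  stmt12_general d v θ μ hmom
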